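/- For 2 ≤ i ≤ 4, the multiplicative orders of c_i and of a_i both equal ∏_{j=1}^{i} N_j; and for every i ≥ 5, the multiplicative orders of c_i and of a_i are both at least ∏_{j=1}^{4} N_j · ∏_{j=5}^{i} (2^(j+2) + 1). -/

import Mathlib

/-- The `j`-th Fermat number `N_j = 2^(2^j) + 1`. -/
def fermatN (j : ℕ) : ℕ := 2 ^ 2 ^ j + 1

/-- `conwayL c n` is the subfield `L_{n-1}` of the algebraic closure of `F_2`
generated over `F_2` by `c 0, …, c (n-1)`; in particular `conwayL c 0 = ⊥ = F_2`. -/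
noncomputable def conwayL (c : ℕ → AlgebraicClosure (ZMod 2)) (n : ℕ) :
    IntermediateField (ZMod 2) (AlgebraicClosure (ZMod 2)) :=
  IntermediateField.adjoin (ZMod 2) (c '' Set.Iio n)

/-!
Let `q = 2^(2^n) = #L_{n-1}` and write `a_{-1} = 1`. Since `c_n ∉ L_{n-1}` is a root of
`X^2 + X + a_{n-1}`, the Frobenius `x ↦ x^q` maps it to the other root `c_n + 1`; hence
`L_n = L_{n-1}(c_n)` has `q^2` elements and `c_n^(N_n) = c_n (c_n + 1) = a_{n-1}`, so that
`a_n = c_n^(N_n + 1)`. With `g_n = gcd(O(c_n), N_n)` this gives `O(c_n) = O(a_{n-1}) g_n`, where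
`g_n ≠ 1` because otherwise `O(c_n) ∣ q - 1` would force `c_n ∈ L_{n-1}`. Moreover `O(c_n)`
divides `q^2 - 1`, whose common divisors with `N_n + 1 = q + 2` divide 3; as `3 ∤ O(c_n)` for
`n ≥ 2`, there `O(a_n) = O(c_n)`, and `O(c_n) = g_1 ⋯ g_n` follows by induction from
`O(c_2) = O(c_1^6) g_2 = 5 g_2 = g_1 g_2`, computed from `O(c_0) = 3`. Finally `g_j = N_j` for
`j ≤ 4` because these Fermat numbers are prime, and `g_j ≥ 2^(j+2) + 1` for `j ≥ 2` because
every prime factor of `N_j` is `≡ 1 (mod 2^(j+2))`.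
-/

open Polynomial IntermediateField

namespace FiniteField

variable {K : Type*} [Field K] [Fintype K]

theorem mem_range_of_pow_card_eq_self {S : Type*} [CommRing S] [IsDomain S] (i : K →+* S)
    {x : S} (hx : x ^ Fintype.card K = x) : x ∈ i.range := by
  have hne : (X ^ Fintype.card K - X : K[X]) ≠ 0 :=
    X_pow_card_sub_X_ne_zero K Fintype.one_lt_card
  have hsplit : (X ^ Fintype.card K - X : K[X]).Splits := by
    rw [splits_iff_card_roots, roots_X_pow_card_sub_X, ← Finset.card_def, Finset.card_univ,
      X_pow_card_sub_X_natDegree_eq K Fintype.one_lt_card]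
  exact hsplit.mem_range_of_isRoot hne (by simp [hx])

variable {E : Type*} [Field E] [Algebra K E]

theorem pow_card_add_one_eq_of_sq_add_self {x : E} {β : K}
    (h : x ^ 2 + x + algebraMap K E β = 0) (hx : x ∉ Set.range (algebraMap K E)) :
    x ^ (Fintype.card K + 1) = algebraMap K E β := by
  have hconj : (x ^ Fintype.card K) ^ 2 + x ^ Fintype.card K + algebraMap K E β = 0 := by
    simpa only [map_add, map_pow, AlgHom.commutes, map_zero, coe_frobeniusAlgHom] using
      congrArg (frobeniusAlgHom K E) h
  have hne : x ^ Fintype.card K ≠ x := fun hfix =>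
    hx (mem_range_of_pow_card_eq_self (algebraMap K E) hfix)
  have hroot : x ^ Fintype.card K = -x - 1 := by
    have hprod : (x ^ Fintype.card K - x) * (x ^ Fintype.card K + x + 1) = 0 := by
      linear_combination hconj - h
    rcases mul_eq_zero.mp hprod with h' | h'
    · exact absurd (sub_eq_zero.mp h') hne
    · linear_combination h'
  rw [pow_succ, hroot]
  linear_combination -h

end FiniteField

theorem IntermediateField.finrank_adjoin_of_sq_add_self {K E : Type*} [Field K] [Field E]
    [Algebra K E] {x : E} {β : K} (h : x ^ 2 + x + algebraMap K E β = 0)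
    (hx : x ∉ Set.range (algebraMap K E)) : Module.finrank K K⟮x⟯ = 2 := by
  set p : K[X] := X ^ 2 + X + C β
  have hp : p.Monic := by unfold p; monicity!
  have hpdeg : p.natDegree = 2 := by unfold p; compute_degree!
  have hpx : aeval x p = 0 := by simpa [p] using h
  have hint : IsIntegral K x := ⟨p, hp, by simpa [aeval_def] using hpx⟩
  rw [adjoin.finrank hint]
  refine le_antisymm ?_ ((minpoly.two_le_natDegree_iff hint).mpr hx)
  exact hpdeg ▸ natDegree_le_of_dvd (minpoly.dvd K x hpx) hp.ne_zero

namespace Nat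

theorem coprime_add_two_of_dvd_sq_sub_one {m q : ℕ} (hq : 0 < q) (hm : m ∣ q ^ 2 - 1)
    (h3 : ¬ 3 ∣ m) : m.Coprime (q + 2) := by
  have hd3 : m.gcd (q + 2) ∣ 3 := by
    have h1 : (m.gcd (q + 2) : ℤ) ∣ (q : ℤ) ^ 2 - 1 := by
      have := Int.natCast_dvd_natCast.mpr ((gcd_dvd_left m (q + 2)).trans hm)
      rwa [cast_sub (one_le_pow _ _ hq), cast_pow, cast_one] at this
    have h2 : (m.gcd (q + 2) : ℤ) ∣ (q : ℤ) + 2 := by exact_mod_cast gcd_dvd_right m (q + 2)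
    have h := _root_.dvd_sub (h2.mul_right ((q : ℤ) - 2)) h1
    rw [show ((q : ℤ) + 2) * (q - 2) - (q ^ 2 - 1) = -3 by ring, dvd_neg] at h
    exact_mod_cast h
  have h3m : Coprime 3 m := (prime_three.coprime_iff_not_dvd).mpr h3
  exact Coprime.eq_one_of_dvd (h3m.coprime_dvd_left hd3) (gcd_dvd_left _ _)

theorem not_three_dvd_fermatNumber {n : ℕ} (hn : n ≠ 0) : ¬ 3 ∣ fermatNumber n := fun h =>
  absurd ((coprime_fermatNumber_fermatNumber hn.symm).eq_one_of_dvd h) (by norm_num)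

theorem le_of_dvd_fermatNumber {n d : ℕ} (hn : 1 < n) (hd : d ∣ fermatNumber n)
    (hd1 : d ≠ 1) : 2 ^ (n + 2) + 1 ≤ d := by
  obtain ⟨k, hk⟩ := fermat_primeFactors_one_lt n d.minFac hn (minFac_prime hd1)
    ((minFac_dvd d).trans hd)
  have hk0 : k ≠ 0 := by
    rintro rfl
    exact (minFac_prime hd1).ne_one (by simpa using hk)
  calc 2 ^ (n + 2) + 1 ≤ k * 2 ^ (n + 2) + 1 := by
        gcongr; exact Nat.le_mul_of_pos_left _ (pos_of_ne_zero hk0)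
    _ = d.minFac := hk.symm
    _ ≤ d := minFac_le (pos_of_dvd_of_pos hd (by have := three_le_fermatNumber n; lia))

end Nat

theorem Finset.prod_Icc_mul_prod_Icc {M : Type*} [CommMonoid M] (f : ℕ → M) {l m n : ℕ}
    (hlm : l ≤ m + 1) (hmn : m ≤ n) :
    (∏ j ∈ Icc l m, f j) * ∏ j ∈ Icc (m + 1) n, f j = ∏ j ∈ Icc l n, f j := by
  simp only [← Finset.Ico_add_one_right_eq_Icc]
  exact prod_Ico_consecutive f hlm (by omega)

theorem fermatN_prime {j : ℕ} (hj : j ≤ 4) : (fermatN j).Prime := by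
  interval_cases j <;> norm_num [fermatN]

section ConwayTower

variable (c : ℕ → AlgebraicClosure (ZMod 2))

instance (n : ℕ) : Finite (conwayL c n) :=
  have : FiniteDimensional (ZMod 2) (conwayL c n) :=
    finiteDimensional_adjoin fun x _ => Algebra.IsIntegral.isIntegral x
  Module.finite_of_finite (ZMod 2)

theorem conwayL_zero : conwayL c 0 = ⊥ := by
  simp [conwayL]

theorem conwayL_succ (n : ℕ) :
    conwayL c (n + 1) = ((conwayL c n)⟮c n⟯).restrictScalars (ZMod 2) := by
  rw [conwayL, conwayL, adjoin_adjoin_left, Set.union_singleton, ← Set.image_insert_eq,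
    ← Order.Iio_succ_eq_insert, Order.succ_eq_add_one]

theorem mem_conwayL_succ (n : ℕ) : c n ∈ conwayL c (n + 1) :=
  subset_adjoin _ _ ⟨n, Set.mem_Iio.mpr n.lt_succ_self, rfl⟩

theorem prod_mem_conwayL (n : ℕ) : ∏ j ∈ Finset.range n, c j ∈ conwayL c n :=
  prod_mem fun j hj => subset_adjoin _ _ ⟨j, Finset.mem_range.mp hj, rfl⟩

noncomputable def fermatPart (n : ℕ) : ℕ := (orderOf (c n)).gcd (fermatN n)

-- `fermatN n` unfolds to `Nat.fermatNumber n`, so the lemmas on the latter apply directly.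
theorem not_three_dvd_fermatPart {n : ℕ} (hn : n ≠ 0) : ¬ 3 ∣ fermatPart c n := fun h =>
  Nat.not_three_dvd_fermatNumber hn (h.trans (Nat.gcd_dvd_right _ _))

structure IsConwayTower : Prop where
  sq_add_self_zero : c 0 ^ 2 + c 0 + 1 = 0
  sq_add_self_succ : ∀ i, c (i + 1) ^ 2 + c (i + 1) + ∏ j ∈ Finset.range (i + 1), c j = 0
  notMem_succ : ∀ i, c (i + 1) ∉ conwayL c (i + 1)

end ConwayTower

namespace IsConwayTower

variable {c : ℕ → AlgebraicClosure (ZMod 2)}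

theorem sq_add_self_add_prod (hc : IsConwayTower c) (n : ℕ) :
    c n ^ 2 + c n + ∏ j ∈ Finset.range n, c j = 0 := by
  cases n with
  | zero => simpa using hc.sq_add_self_zero
  | succ n => exact hc.sq_add_self_succ n

theorem notMem_conwayL (hc : IsConwayTower c) (n : ℕ) : c n ∉ conwayL c n := by
  cases n with
  | succ n => exact hc.notMem_succ n
  | zero =>
    rw [conwayL_zero, mem_bot]
    rintro ⟨y, hy⟩
    have h := hc.sq_add_self_zero
    rw [← hy, ← map_pow, ← map_add, ← map_one (algebraMap (ZMod 2) _), ← map_add,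
      map_eq_zero] at h
    clear hy
    revert y h
    decide

theorem ne_zero (hc : IsConwayTower c) (n : ℕ) : c n ≠ 0 :=
  fun h => hc.notMem_conwayL n (h ▸ zero_mem _)

theorem prod_ne_zero (hc : IsConwayTower c) (n : ℕ) : ∏ j ∈ Finset.range n, c j ≠ 0 :=
  Finset.prod_ne_zero_iff.mpr fun j _ => hc.ne_zero j

theorem sq_add_self_add_algebraMap (hc : IsConwayTower c) (n : ℕ) :
    c n ^ 2 + c n + algebraMap (conwayL c n) _ ⟨_, prod_mem_conwayL c n⟩ = 0 :=
  hc.sq_add_self_add_prod n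

theorem notMem_range_algebraMap (hc : IsConwayTower c) (n : ℕ) :
    c n ∉ Set.range (algebraMap (conwayL c n) _) := by
  rw [show Set.range (algebraMap (conwayL c n) _) = conwayL c n from Subtype.range_coe]
  exact hc.notMem_conwayL n

theorem natCard_conwayL (hc : IsConwayTower c) (n : ℕ) :
    Nat.card (conwayL c n) = 2 ^ 2 ^ n := by
  induction n with
  | zero => rw [conwayL_zero, Nat.card_congr (botEquiv (ZMod 2) _).toEquiv, Nat.card_zmod]; rfl
  | succ n ih =>
    have hrank : Module.finrank (conwayL c n) (conwayL c n)⟮c n⟯ = 2 :=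
      finrank_adjoin_of_sq_add_self (hc.sq_add_self_add_algebraMap n)
        (hc.notMem_range_algebraMap n)
    have : Module.Finite (conwayL c n) (conwayL c n)⟮c n⟯ :=
      Module.finite_of_finrank_eq_succ hrank
    have hcard : Nat.card (conwayL c (n + 1)) = Nat.card (conwayL c n)⟮c n⟯ := by
      rw [conwayL_succ]; rfl
    rw [hcard, Module.natCard_eq_pow_finrank (K := conwayL c n), hrank, ih, ← pow_mul,
      ← pow_succ]

theorem pow_fermatN (hc : IsConwayTower c) (n : ℕ) :
    c n ^ fermatN n = ∏ j ∈ Finset.range n, c j := by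
  let _ := Fintype.ofFinite (conwayL c n)
  have h := FiniteField.pow_card_add_one_eq_of_sq_add_self (hc.sq_add_self_add_algebraMap n)
    (hc.notMem_range_algebraMap n)
  rwa [Fintype.card_eq_nat_card, hc.natCard_conwayL] at h

theorem orderOf_dvd_of_mem (hc : IsConwayTower c) {n : ℕ} {x : AlgebraicClosure (ZMod 2)}
    (hx : x ∈ conwayL c n) (hx0 : x ≠ 0) : orderOf x ∣ 2 ^ 2 ^ n - 1 := by
  let _ := Fintype.ofFinite (conwayL c n)
  have h := FiniteField.pow_card_sub_one_eq_one (⟨x, hx⟩ : conwayL c n)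
    fun h0 => hx0 (congrArg Subtype.val h0)
  rw [Fintype.card_eq_nat_card, hc.natCard_conwayL] at h
  exact orderOf_dvd_of_pow_eq_one (by simpa using congrArg Subtype.val h)

theorem not_orderOf_dvd (hc : IsConwayTower c) (n : ℕ) : ¬ orderOf (c n) ∣ 2 ^ 2 ^ n - 1 := by
  let _ := Fintype.ofFinite (conwayL c n)
  intro h
  refine hc.notMem_range_algebraMap n (FiniteField.mem_range_of_pow_card_eq_self _ ?_)
  rw [Fintype.card_eq_nat_card, hc.natCard_conwayL, ← Nat.sub_add_cancel Nat.one_le_two_pow,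
    pow_succ, orderOf_dvd_iff_pow_eq_one.mp h, one_mul]

theorem orderOf_prod_range_mul_fermatPart (hc : IsConwayTower c) (n : ℕ) :
    orderOf (∏ j ∈ Finset.range n, c j) * fermatPart c n = orderOf (c n) := by
  rw [← hc.pow_fermatN, orderOf_pow' _ (by simp [fermatN]), fermatPart,
    Nat.div_mul_cancel (Nat.gcd_dvd_left _ _)]

theorem fermatPart_ne_one (hc : IsConwayTower c) (n : ℕ) : fermatPart c n ≠ 1 := by
  intro h
  have horder := hc.orderOf_prod_range_mul_fermatPart n
  rw [h, mul_one] at horder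
  exact hc.not_orderOf_dvd n
    (horder ▸ hc.orderOf_dvd_of_mem (prod_mem_conwayL c n) (hc.prod_ne_zero n))

theorem fermatPart_eq_of_prime (hc : IsConwayTower c) {n : ℕ} (hp : (fermatN n).Prime) :
    fermatPart c n = fermatN n :=
  (hp.eq_one_or_self_of_dvd _ (Nat.gcd_dvd_right _ _)).resolve_left (hc.fermatPart_ne_one n)

theorem le_fermatPart (hc : IsConwayTower c) {n : ℕ} (hn : 1 < n) :
    2 ^ (n + 2) + 1 ≤ fermatPart c n :=
  Nat.le_of_dvd_fermatNumber hn (Nat.gcd_dvd_right _ _) (hc.fermatPart_ne_one n)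

theorem orderOf_prod_range_succ (hc : IsConwayTower c) (n : ℕ) :
    orderOf (∏ j ∈ Finset.range (n + 1), c j)
      = orderOf (c n) / (orderOf (c n)).gcd (fermatN n + 1) := by
  rw [Finset.prod_range_succ, ← hc.pow_fermatN, ← pow_succ, orderOf_pow' _ (Nat.succ_ne_zero _)]

theorem orderOf_prod_range_succ_of_not_three_dvd (hc : IsConwayTower c) {n : ℕ}
    (h3 : ¬ 3 ∣ orderOf (c n)) :
    orderOf (∏ j ∈ Finset.range (n + 1), c j) = orderOf (c n) := by
  have hdvd : orderOf (c n) ∣ (2 ^ 2 ^ n) ^ 2 - 1 := by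
    rw [← pow_mul, ← pow_succ]
    exact hc.orderOf_dvd_of_mem (mem_conwayL_succ c n) (hc.ne_zero n)
  rw [hc.orderOf_prod_range_succ, fermatN, add_assoc, one_add_one_eq_two,
    Nat.Coprime.gcd_eq_one (Nat.coprime_add_two_of_dvd_sq_sub_one (by positivity) hdvd h3),
    Nat.div_one]

theorem orderOf_c_zero (hc : IsConwayTower c) : orderOf (c 0) = 3 :=
  have : Fact (Nat.Prime 3) := ⟨Nat.prime_three⟩
  orderOf_eq_prime (by linear_combination (c 0 - 1) * hc.sq_add_self_zero)
    (fun h => by simpa [h] using hc.notMem_conwayL 0)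

theorem orderOf_c_one (hc : IsConwayTower c) : orderOf (c 1) = 15 := by
  rw [← hc.orderOf_prod_range_mul_fermatPart,
    hc.fermatPart_eq_of_prime (fermatN_prime (by norm_num))]
  simp [hc.orderOf_c_zero, fermatN]

theorem orderOf_c_two (hc : IsConwayTower c) :
    orderOf (c 2) = fermatPart c 1 * fermatPart c 2 := by
  rw [← hc.orderOf_prod_range_mul_fermatPart, hc.orderOf_prod_range_succ, hc.orderOf_c_one,
    hc.fermatPart_eq_of_prime (n := 1) (fermatN_prime (by norm_num))]
  norm_num [fermatN]

theorem not_three_dvd_orderOf (hc : IsConwayTower c) {n : ℕ} (hn : 2 ≤ n) :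
    ¬ 3 ∣ orderOf (c n) := by
  induction n, hn using Nat.le_induction with
  | base =>
    rw [hc.orderOf_c_two, hc.fermatPart_eq_of_prime (n := 1) (fermatN_prime (by norm_num))]
    exact Nat.prime_three.not_dvd_mul (by norm_num [fermatN])
      (not_three_dvd_fermatPart c two_ne_zero)
  | succ n hn ih =>
    rw [← hc.orderOf_prod_range_mul_fermatPart, hc.orderOf_prod_range_succ_of_not_three_dvd ih]
    exact Nat.prime_three.not_dvd_mul ih (not_three_dvd_fermatPart c n.succ_ne_zero)

theorem orderOf_prod_range_succ_eq_orderOf (hc : IsConwayTower c) {n : ℕ} (hn : 2 ≤ n) :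
    orderOf (∏ j ∈ Finset.range (n + 1), c j) = orderOf (c n) :=
  hc.orderOf_prod_range_succ_of_not_three_dvd (hc.not_three_dvd_orderOf hn)

theorem orderOf_eq_prod_fermatPart (hc : IsConwayTower c) {n : ℕ} (hn : 2 ≤ n) :
    orderOf (c n) = ∏ j ∈ Finset.Icc 1 n, fermatPart c j := by
  induction n, hn using Nat.le_induction with
  | base => rw [hc.orderOf_c_two, Finset.prod_Icc_succ_top (by norm_num), Finset.Icc_self,
      Finset.prod_singleton]
  | succ n hn ih =>
    rw [Finset.prod_Icc_succ_top (by omega), ← ih, ← hc.orderOf_prod_range_mul_fermatPart,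
      hc.orderOf_prod_range_succ_eq_orderOf hn]

end IsConwayTower

/-- For `2 ≤ i ≤ 4`, the multiplicative orders of `c_i` and of
`a_i = ∏_{j=0}^{i} c_j` both equal `∏_{j=1}^{i} N_j`; and for every `i ≥ 5`,
they are both at least `∏_{j=1}^{4} N_j · ∏_{j=5}^{i} (2^(j+2) + 1)`. -/
theorem conway_order_bounds (c : ℕ → AlgebraicClosure (ZMod 2))
    (hc0 : c 0 ^ 2 + c 0 + 1 = 0)
    (hrec : ∀ i : ℕ, c (i + 1) ^ 2 + c (i + 1) + ∏ j ∈ Finset.range (i + 1), c j = 0)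
    (hnot : ∀ i : ℕ, c (i + 1) ∉ conwayL c (i + 1))
    (i : ℕ) :
    (2 ≤ i → i ≤ 4 →
      orderOf (c i) = ∏ j ∈ Finset.Icc 1 i, fermatN j ∧
      orderOf (∏ j ∈ Finset.range (i + 1), c j) = ∏ j ∈ Finset.Icc 1 i, fermatN j) ∧
    (5 ≤ i →
      (∏ j ∈ Finset.Icc 1 4, fermatN j) * ∏ j ∈ Finset.Icc 5 i, (2 ^ (j + 2) + 1)
        ≤ orderOf (c i) ∧
      (∏ j ∈ Finset.Icc 1 4, fermatN j) * ∏ j ∈ Finset.Icc 5 i, (2 ^ (j + 2) + 1)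
        ≤ orderOf (∏ j ∈ Finset.range (i + 1), c j)) := by
  have hc : IsConwayTower c := ⟨hc0, hrec, hnot⟩
  have hsmall {n : ℕ} (hn : n ≤ 4) :
      ∏ j ∈ Finset.Icc 1 n, fermatPart c j = ∏ j ∈ Finset.Icc 1 n, fermatN j :=
    Finset.prod_congr rfl fun j hj =>
      hc.fermatPart_eq_of_prime (fermatN_prime ((Finset.mem_Icc.mp hj).2.trans hn))
  refine ⟨fun h2 h4 => ?_, fun h5 => ?_⟩
  · rw [hc.orderOf_prod_range_succ_eq_orderOf h2, hc.orderOf_eq_prod_fermatPart h2, hsmall h4]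
    exact ⟨rfl, rfl⟩
  · have h2 : 2 ≤ i := by omega
    have hle : (∏ j ∈ Finset.Icc 1 4, fermatN j) * ∏ j ∈ Finset.Icc 5 i, (2 ^ (j + 2) + 1)
        ≤ orderOf (c i) := by
      rw [hc.orderOf_eq_prod_fermatPart h2,
        ← Finset.prod_Icc_mul_prod_Icc _ (by norm_num : 1 ≤ 4 + 1) (by omega : 4 ≤ i),
        hsmall le_rfl]
      exact Nat.mul_le_mul_left _ (Finset.prod_le_prod' fun j hj =>
        hc.le_fermatPart ((by norm_num : 1 < 5).trans_le (Finset.mem_Icc.mp hj).1))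
    exact ⟨hle, hc.orderOf_prod_range_succ_eq_orderOf h2 ▸ hle⟩
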